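/- In the reduction from Equitable Coloring: given a graph G = (V, E) and ℓ ∈ ℕ, if G admits an equitable ℓ-coloring, then the allocation assigning each vertex resource v to the color agent c(v) is a complete EF1-init allocation of the constructed instance. -/
import Mathlib


variable {V : Type*} [Fintype V] [DecidableEq V]

/-- Additive utility of agent `i` for a bundle `X`. -/
def util {A R : Type*} (u : A → R → ℚ) (i : A) (X : Finset R) : ℚ := ∑ r ∈ X, u i r

/-- EF1-init. -/
def EF1init {A R : Type*} [DecidableEq R] (b : A → ℚ) (u : A → R → ℚ)
    (X : A → Finset R) : Prop :=
  ∀ i j : A, X j = ∅ ∨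
    ∃ r ∈ X j, b j + util u i ((X j).erase r) ≤ b i + util u i (X i)

/-- Initial utilities in the constructed instance: edge agents have `|V| + 1`,
color agents have `0`. -/
def redB (G : SimpleGraph V) [DecidableRel G.Adj] (ℓ : ℕ) :
    (↥G.edgeFinset ⊕ Fin ℓ) → ℚ
  | Sum.inl _ => (Fintype.card V : ℚ) + 1
  | Sum.inr _ => 0

/-- Per-resource utilities: an edge agent values each of its two endpoints at
`|V| + 2` and everything else at `0`; a color agent values every resource at `1`. -/
def redU (G : SimpleGraph V) [DecidableRel G.Adj] (ℓ : ℕ) :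
    (↥G.edgeFinset ⊕ Fin ℓ) → V → ℚ
  | Sum.inl e => fun v => if v ∈ (e : Sym2 V) then (Fintype.card V : ℚ) + 2 else 0
  | Sum.inr _ => fun _ => 1

/-- Forward direction of the reduction: an equitable proper `ℓ`-coloring of `G`
induces a complete EF1-init allocation (each vertex resource `v` goes to the
color agent `c v`). -/
theorem stmt_12 (G : SimpleGraph V) [DecidableRel G.Adj] (ℓ : ℕ)
    (c : V → Fin ℓ)
    (hproper : ∀ a b : V, G.Adj a b → c a ≠ c b)
    (hequit : ∀ h h' : Fin ℓ,
      (Finset.univ.filter (fun v => c v = h)).card ≤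
        (Finset.univ.filter (fun v => c v = h')).card + 1) :
    let X : (↥G.edgeFinset ⊕ Fin ℓ) → Finset V := fun a =>
      match a with
      | Sum.inl _ => ∅
      | Sum.inr h => Finset.univ.filter (fun v => c v = h)
    (∀ a a', a ≠ a' → Disjoint (X a) (X a')) ∧
    (∀ v : V, ∃ a, v ∈ X a) ∧
    EF1init (redB G ℓ) (redU G ℓ) X := by
  intro X
  have hX : ∀ h : Fin ℓ, X (Sum.inr h) = Finset.univ.filter (fun v => c v = h) := fun _ => rfl
  have hX0 : ∀ e, X (Sum.inl e) = ∅ := fun _ => rfl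
  refine ⟨?_, ?_, ?_⟩
  · rintro (e | h) (e' | h') hne
    · simp [X]
    · simp [X]
    · simp [X]
    · rw [Finset.disjoint_left]
      intro v hv hv'
      rw [hX, Finset.mem_filter] at hv hv'
      exact hne (by rw [← hv.2, hv'.2])
  · intro v
    exact ⟨Sum.inr (c v), by simp [X]⟩
  · rintro i (e | h)
    · exact Or.inl rfl
    by_cases hS : X (Sum.inr h) = ∅
    · exact Or.inl hS
    right
    obtain ⟨a0, ha0⟩ := Finset.nonempty_iff_ne_empty.mpr hS
    match i with
    | Sum.inr h' =>
      refine ⟨a0, ha0, ?_⟩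
      have hcard : ((X (Sum.inr h)).erase a0).card + 1 = (X (Sum.inr h)).card :=
        Finset.card_erase_add_one ha0
      have hle := hequit h h'
      have h1 : util (redU G ℓ) (Sum.inr h') ((X (Sum.inr h)).erase a0)
          = ((X (Sum.inr h)).erase a0).card := by
        simp [util, redU]
      have h2 : util (redU G ℓ) (Sum.inr h') (X (Sum.inr h'))
          = (X (Sum.inr h')).card := by
        simp [util, redU]
      rw [hX, hX] at *
      rw [h1, h2, redB, redB]
      have : (((Finset.univ.filter (fun v => c v = h)).erase a0).card : ℚ)
          ≤ ((Finset.univ.filter (fun v => c v = h')).card : ℚ) := by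
        exact_mod_cast Nat.le_of_add_le_add_right (hcard ▸ hle : _)
      linarith
    | Sum.inl e =>
      obtain ⟨p, hp⟩ := e
      induction p using Sym2.ind with
      | _ a b =>
        have hadj : G.Adj a b := by
          rwa [SimpleGraph.mem_edgeFinset, SimpleGraph.mem_edgeSet] at hp
        have hne := hproper a b hadj
        have key : ∀ S : Finset V, a ∉ S → b ∉ S →
            util (redU G ℓ) (Sum.inl ⟨s(a,b), hp⟩) S = 0 := by
          intro S haS hbS
          refine Finset.sum_eq_zero fun v hv => ?_
          have : v ∉ s(a,b) := by
            rw [Sym2.mem_iff]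
            rintro (rfl | rfl) <;> [exact haS hv; exact hbS hv]
          simp [redU, this]
        have hpos : (0:ℚ) ≤ (Fintype.card V : ℚ) + 1 := by positivity
        by_cases hah : c a = h
        · refine ⟨a, by simp [hX, hah], ?_⟩
          have hb : b ∉ (X (Sum.inr h)).erase a := by
            intro hmem
            rw [Finset.mem_erase, hX, Finset.mem_filter] at hmem
            exact hne (hah.trans hmem.2.2.symm)
          have ha : a ∉ (X (Sum.inr h)).erase a := Finset.notMem_erase _ _
          rw [key _ ha hb]
          have : util (redU G ℓ) (Sum.inl ⟨s(a,b), hp⟩) (X (Sum.inl ⟨s(a,b), hp⟩)) = 0 :=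
            key _ (Finset.notMem_empty a) (Finset.notMem_empty b)
          rw [this]
          simp only [redB]
          linarith
        · by_cases hbh : c b = h
          · refine ⟨b, by simp [hX, hbh], ?_⟩
            have ha : a ∉ (X (Sum.inr h)).erase b := by
              simp [hX, hah]
            rw [key _ ha (Finset.notMem_erase _ _)]
            have : util (redU G ℓ) (Sum.inl ⟨s(a,b), hp⟩) (X (Sum.inl ⟨s(a,b), hp⟩)) = 0 :=
              key _ (Finset.notMem_empty a) (Finset.notMem_empty b)
            rw [this]
            simp only [redB]
            linarith
          · refine ⟨a0, ha0, ?_⟩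
            have ha : a ∉ (X (Sum.inr h)).erase a0 := by simp [hX, hah]
            have hb : b ∉ (X (Sum.inr h)).erase a0 := by simp [hX, hbh]
            rw [key _ ha hb]
            have : util (redU G ℓ) (Sum.inl ⟨s(a,b), hp⟩) (X (Sum.inl ⟨s(a,b), hp⟩)) = 0 :=
              key _ (Finset.notMem_empty a) (Finset.notMem_empty b)
            rw [this]
            simp only [redB]
            linarith
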